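/- arXiv:2303.06171 — 4 statements merged into one kernel-verified Lean document; each statement's English description precedes it below -/
import Mathlib

section
/- Let C, λ, M, c be positive reals and let u be a real number with |u| ≤ c*M and C*M < 2λ + C*M. Then artanh(C*u / (c*(2λ + C*M))) ≤ (1/2) * log(1 + C*M/λ). -/
/-- The inverse hyperbolic tangent, defined as the inverse of `Real.tanh`. -/
noncomputable def artanh : ℝ → ℝ := Function.invFun Real.tanh

theorem artanh_eq_real_artanh {x : ℝ} (hx : x ∈ Set.Ioo (-1) 1) : artanh x = Real.artanh x := by
  conv_lhs => rw [← Real.tanh_artanh hx]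
  exact Function.leftInverse_invFun Real.tanh_injective _

theorem Real.artanh_div_add_two_mul {a b : ℝ} (ha : 0 ≤ a) (hb : 0 < b) :
    Real.artanh (a / (2 * b + a)) = 1 / 2 * Real.log (1 + a / b) := by
  have hD : 0 < 2 * b + a := by linarith
  have hle : a / (2 * b + a) ≤ 1 := (div_le_one hD).2 (by linarith)
  have hnonneg : 0 ≤ a / (2 * b + a) := div_nonneg ha hD.le
  rw [Real.artanh_eq_half_log ⟨by linarith, hle⟩]
  congr 2
  field_simp
  ring

theorem artanh_sensitivity_upper_bound_general
    (C lam M c u : ℝ) (hC : 0 < C) (hlam : 0 < lam) (hM : 0 < M) (hc : 0 < c)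
    (hu : |u| ≤ c * M) :
    artanh (C * u / (c * (2 * lam + C * M))) ≤ (1 / 2) * Real.log (1 + C * M / lam) := by
  set D := 2 * lam + C * M
  have hD : 0 < D := by positivity
  set t := C * u / (c * D)
  set s := C * M / D
  have hts : |t| ≤ s := calc
    |t| = C * |u| / (c * D) := by
      rw [abs_div, abs_mul, abs_of_pos hC, abs_of_pos (mul_pos hc hD)]
    _ ≤ C * (c * M) / (c * D) := by gcongr
    _ = s := by rw [mul_left_comm, mul_div_mul_left _ _ hc.ne']
  have hs : s < 1 := (div_lt_one hD).2 (by linarith)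
  have ht : t ∈ Set.Ioo (-1) 1 := ⟨by linarith [neg_abs_le t], by linarith [le_abs_self t]⟩
  have hs' : s ∈ Set.Ioo (-1) 1 := ⟨by linarith [abs_nonneg t], hs⟩
  calc artanh t = Real.artanh t := artanh_eq_real_artanh ht
    _ ≤ Real.artanh s := (Real.artanh_le_artanh_iff ht hs').2 (le_of_abs_le hts)
    _ = 1 / 2 * Real.log (1 + C * M / lam) :=
      Real.artanh_div_add_two_mul (by positivity) hlam

theorem artanh_sensitivity_upper_bound
    (C lam M c u : ℝ) (hC : 0 < C) (hlam : 0 < lam) (hM : 0 < M) (hc : 0 < c)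
    (hu : |u| ≤ c * M) (hCM : C * M < 2 * lam + C * M) :
    artanh (C * u / (c * (2 * lam + C * M))) ≤ (1 / 2) * Real.log (1 + C * M / lam) :=
  artanh_sensitivity_upper_bound_general C lam M c u hC hlam hM hc hu
end

section
/- For every p ∈ [0,1], every ε with 0 ≤ ε ≤ 1, and every K ∈ ℕ, K * log((1 − p + p*exp(ε)) / (1 − p + p*exp(−ε))) ≤ 6 * K * p * ε. -/
theorem sampling_privacy_amplification
    (p ε : ℝ) (hp0 : 0 ≤ p) (hp1 : p ≤ 1) (hε0 : 0 ≤ ε) (hε1 : ε ≤ 1) (K : ℕ) :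
    (K : ℝ) * Real.log ((1 - p + p * Real.exp ε) / (1 - p + p * Real.exp (-ε)))
      ≤ 6 * K * p * ε := by
  set A := 1 - p + p * Real.exp ε with hAdef
  set B := 1 - p + p * Real.exp (-ε) with hBdef
  have hexpe : Real.exp ε ≤ 3 := by
    have h1 : Real.exp ε ≤ Real.exp 1 := Real.exp_le_exp.mpr hε1
    have h2 : Real.exp 1 < 2.7182818286 := Real.exp_one_lt_d9
    linarith
  have hme : 1 - ε ≤ Real.exp (-ε) := by
    have := Real.add_one_le_exp (-ε); linarith
  have hmepos : 0 < Real.exp (-ε) := Real.exp_pos _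
  have hepos : 0 < Real.exp ε := Real.exp_pos _
  have hone : 1 ≤ Real.exp ε := Real.one_le_exp hε0
  have hmle : Real.exp (-ε) ≤ 1 := Real.exp_le_one_iff.mpr (by linarith)
  have hA1 : 1 ≤ A := by nlinarith
  have hB : Real.exp (-ε) ≤ B := by nlinarith
  have hBpos : 0 < B := lt_of_lt_of_le hmepos hB
  have hApos : 0 < A := lt_of_lt_of_le one_pos hA1
  have hmul : Real.exp ε * Real.exp (-ε) = 1 := by
    rw [← Real.exp_add]; simp
  -- exp ε - 1 ≤ 3 ε
  have hkey1 : Real.exp ε - 1 ≤ 3 * ε := by nlinarith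
  -- 1/B ≤ exp ε
  have hinvB : B⁻¹ ≤ Real.exp ε := by
    rw [inv_le_iff_one_le_mul₀ hBpos]
    nlinarith
  have hlogA : Real.log A ≤ 3 * p * ε := by
    have := Real.log_le_sub_one_of_pos hApos
    nlinarith
  have hlogB : -Real.log B ≤ 3 * p * ε := by
    have h1 : Real.log B⁻¹ ≤ B⁻¹ - 1 := Real.log_le_sub_one_of_pos (by positivity)
    rw [Real.log_inv] at h1
    have h2 : B⁻¹ - 1 = (1 - B) * B⁻¹ := by field_simp
    have h3 : 1 - B ≤ p * ε := by nlinarith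
    have h4 : (1 - B) * B⁻¹ ≤ p * ε * Real.exp ε := by
      have hB1 : 0 ≤ 1 - B ∨ 1 - B < 0 := le_or_gt _ _
      rcases hB1 with h | h
      · calc (1 - B) * B⁻¹ ≤ (p * ε) * Real.exp ε := by
              apply mul_le_mul h3 hinvB (by positivity) (by positivity)
        _ = p * ε * Real.exp ε := by ring
      · have : (1 - B) * B⁻¹ < 0 := mul_neg_of_neg_of_pos h (by positivity)
        nlinarith [mul_nonneg (mul_nonneg hp0 hε0) hepos.le]
    have h5 : p * ε * Real.exp ε ≤ 3 * (p * ε) := by nlinarith [mul_nonneg hp0 hε0]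
    linarith
  have hmain : Real.log (A / B) ≤ 6 * p * ε := by
    rw [Real.log_div hApos.ne' hBpos.ne']
    linarith
  have hK : (0:ℝ) ≤ K := Nat.cast_nonneg K
  calc (K : ℝ) * Real.log (A / B) ≤ (K : ℝ) * (6 * p * ε) :=
        mul_le_mul_of_nonneg_left hmain hK
    _ = 6 * K * p * ε := by ring
end

section
/- For p ∈ [0,1], ε ∈ (0,1], δ ≥ 0, and K ∈ ℕ with K*p*ε ≤ 1/2, we have (δ/(exp(ε)−1)) * ((1 − p + p*exp(ε))^K − 1) ≤ 2*K*p*δ. -/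
lemma exp_le_linear_aux {s : ℝ} (h0 : 0 ≤ s) (h1 : s ≤ 1) :
    Real.exp s ≤ 1 + s * (Real.exp 1 - 1) := by
  have h := convexOn_exp.2 (Set.mem_univ (0:ℝ)) (Set.mem_univ (1:ℝ))
    (by linarith : (0:ℝ) ≤ 1 - s) h0 (by ring)
  simp only [smul_eq_mul, mul_zero, mul_one, zero_add, Real.exp_zero] at h
  linarith

theorem additive_privacy_term_bound
    (p ε δ : ℝ) (K : ℕ)
    (hp0 : 0 ≤ p) (hp1 : p ≤ 1) (hε0 : 0 < ε) (hε1 : ε ≤ 1) (hδ : 0 ≤ δ)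
    (hK : (K : ℝ) * p * ε ≤ 1 / 2) :
    (δ / (Real.exp ε - 1)) * ((1 - p + p * Real.exp ε) ^ K - 1) ≤ 2 * K * p * δ := by
  set E := Real.exp ε with hE
  have he : Real.exp 1 < 2.7182818286 := Real.exp_one_lt_d9
  have he1 : 1 < Real.exp 1 := by nlinarith [Real.add_one_le_exp (1:ℝ)]
  have hE1 : 1 + ε ≤ E := by simpa [add_comm] using Real.add_one_le_exp ε
  have hEpos : 1 < E := by linarith
  have hEup : E ≤ 1 + ε * (Real.exp 1 - 1) := exp_le_linear_aux (le_of_lt hε0) hε1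
  set x := p * (E - 1) with hx
  have hx0 : 0 ≤ x := mul_nonneg hp0 (by linarith)
  have hKnn : (0:ℝ) ≤ (K : ℝ) := Nat.cast_nonneg K
  have hxle : x ≤ p * ε * (Real.exp 1 - 1) := by nlinarith
  have ht : (K : ℝ) * x ≤ (Real.exp 1 - 1) / 2 := by nlinarith
  have ht1 : (K : ℝ) * x ≤ 1 := by nlinarith
  have ht0 : 0 ≤ (K : ℝ) * x := mul_nonneg hKnn hx0
  -- (1+x)^K ≤ exp (K x)
  have h1 : (1 + x) ^ K ≤ Real.exp ((K : ℝ) * x) := by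
    rw [Real.exp_nat_mul]
    exact pow_le_pow_left₀ (by linarith) (by linarith [Real.add_one_le_exp x]) K
  have h2 : Real.exp ((K : ℝ) * x) ≤ 1 + (K : ℝ) * x * (Real.exp 1 - 1) :=
    exp_le_linear_aux ht0 ht1
  have h3 : (1 + x) ^ K - 1 ≤ 2 * ((K : ℝ) * x) := by nlinarith
  have hbase : 1 - p + p * E = 1 + x := by rw [hx]; ring
  rw [hbase]
  have hdiv : 0 ≤ δ / (E - 1) := div_nonneg hδ (by linarith)
  have := mul_le_mul_of_nonneg_left h3 hdiv
  calc δ / (E - 1) * ((1 + x) ^ K - 1) ≤ δ / (E - 1) * (2 * ((K:ℝ) * x)) := this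
    _ = 2 * K * p * δ := by
        have hne : E - 1 ≠ 0 := by linarith
        rw [hx, div_mul_eq_mul_div, div_eq_iff hne]; ring
end

section
/- Let ξ ~ N(0, σ²) with σ > 0, and for states θ, θ' define a(θ,θ') = E[min(1, (π(θ')q(θ|θ')/(π(θ)q(θ'|θ)))·exp(ξ − σ²/2))]. Then the detailed balance condition π(θ)q(θ'|θ)a(θ,θ') = π(θ')q(θ|θ')a(θ',θ) holds. Equivalently, for any real t and σ > 0, E_{ξ~N(0,σ²)}[min(1, e^{t + ξ − σ²/2})] = e^t · E_{ξ~N(0,σ²)}[min(1, e^{−t + ξ − σ²/2})]. -/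
open MeasureTheory ProbabilityTheory

lemma gaussianPDFReal_reflect (σ : ℝ) (hσ : 0 < σ) (x : ℝ) :
    gaussianPDFReal 0 ⟨σ ^ 2, sq_nonneg σ⟩ (σ ^ 2 - x)
      = gaussianPDFReal 0 ⟨σ ^ 2, sq_nonneg σ⟩ x * Real.exp (x - σ ^ 2 / 2) := by
  simp only [gaussianPDFReal, NNReal.coe_mk, sub_zero, mul_assoc, ← Real.exp_add]
  congr 1
  congr 1
  have hσ2 : σ ^ 2 ≠ 0 := by positivity
  change -(σ ^ 2 - x) ^ 2 / (2 * σ ^ 2) = -x ^ 2 / (2 * σ ^ 2) + (x - σ ^ 2 / 2)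
  field_simp
  ring

theorem penalty_gaussian_identity (σ : ℝ) (hσ : 0 < σ) (t : ℝ) :
    ∫ ξ, min 1 (Real.exp (t + ξ - σ ^ 2 / 2)) ∂(gaussianReal 0 ⟨σ ^ 2, sq_nonneg σ⟩)
      = Real.exp t *
        ∫ ξ, min 1 (Real.exp (-t + ξ - σ ^ 2 / 2)) ∂(gaussianReal 0 ⟨σ ^ 2, sq_nonneg σ⟩) := by
  set v : NNReal := ⟨σ ^ 2, sq_nonneg σ⟩ with hv
  have hv0 : v ≠ 0 := by
    simp only [hv, ne_eq, ← NNReal.coe_eq_zero, NNReal.coe_mk]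
    exact fun h => (pow_pos hσ 2).ne' (congrArg Subtype.val h)
  have hrepr : gaussianReal 0 v = volume.withDensity (gaussianPDF 0 v) :=
    gaussianReal_of_var_ne_zero 0 hv0
  have hpdf : gaussianPDF 0 v = fun x => ((gaussianPDFReal 0 v x).toNNReal : ENNReal) := by
    funext x
    simp [gaussianPDF, ENNReal.ofReal]
  have hmeas : Measurable fun x => (gaussianPDFReal 0 v x).toNNReal :=
    (measurable_gaussianPDFReal 0 v).real_toNNReal
  have hint : ∀ g : ℝ → ℝ, ∫ ξ, g ξ ∂(gaussianReal 0 v)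
      = ∫ x, gaussianPDFReal 0 v x * g x := by
    intro g
    rw [hrepr, hpdf, integral_withDensity_eq_integral_smul hmeas]
    refine integral_congr_ae (Filter.Eventually.of_forall fun x => ?_)
    show (gaussianPDFReal 0 v x).toNNReal • g x = _
    rw [NNReal.smul_def, Real.coe_toNNReal _ (gaussianPDFReal_nonneg 0 v x), smul_eq_mul]
  rw [hint, hint, ← integral_const_mul]
  rw [← integral_sub_left_eq_self
    (fun x => gaussianPDFReal 0 v x * min 1 (Real.exp (t + x - σ ^ 2 / 2))) volume (σ ^ 2)]
  refine integral_congr_ae (Filter.Eventually.of_forall fun x => ?_)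
  simp only
  rw [gaussianPDFReal_reflect σ hσ x]
  have h1 : Real.exp (x - σ ^ 2 / 2) * min 1 (Real.exp (t + (σ ^ 2 - x) - σ ^ 2 / 2))
      = min (Real.exp (x - σ ^ 2 / 2)) (Real.exp t) := by
    rw [mul_min_of_nonneg _ _ (Real.exp_nonneg _), mul_one, ← Real.exp_add]
    ring_nf
  have h2 : Real.exp t * min 1 (Real.exp (-t + x - σ ^ 2 / 2))
      = min (Real.exp t) (Real.exp (x - σ ^ 2 / 2)) := by
    rw [mul_min_of_nonneg _ _ (Real.exp_nonneg _), mul_one, ← Real.exp_add]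
    ring_nf
  rw [mul_assoc, h1, min_comm, ← h2]
  ring
end
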